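/- arXiv:2401.07987 — 3 statements merged into one kernel-verified Lean document; each statement's English description precedes it below -/
import Mathlib

section
/- Let R be a commutative noetherian ring, let a be an ideal of R, let M be an R-module, and let N ⊆ M be a submodule which is Gorenstein injective as an R-module. Then the sequence 0 → Γ_a(N) → Γ_a(M) → Γ_a(M/N) → 0 is exact; that is, the natural map Γ_a(M) → Γ_a(M/N) induced by the quotient map M → M/N is surjective and has kernel Γ_a(N), so Γ_a(M/N) ≅ Γ_a(M)/Γ_a(N). -/
open CategoryTheory

universe u

/-- The `a`-torsion submodule `Γ_a(M) = {x ∈ M | a^n x = 0 for some n}`. -/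
def torsionGamma {R : Type u} [CommRing R] (a : Ideal R) (M : Type u)
    [AddCommGroup M] [Module R M] : Submodule R M :=
  ⨆ n : ℕ, Submodule.torsionBySet R M ((a ^ n : Ideal R) : Set R)

/-- Data witnessing that `G` is Gorenstein injective: a ℤ-indexed exact complex of
injective modules, remaining exact after `Hom_R(E', -)` for every injective `E'`,
with `G ≅ ker(E_0 → E_{-1})`. -/
structure GorensteinInjData (R : Type u) [CommRing R] (G : Type u)
    [AddCommGroup G] [Module R G] where
  E : ℤ → Type u
  [acg : ∀ i, AddCommGroup (E i)]
  [mod : ∀ i, Module R (E i)]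
  d : ∀ i : ℤ, E (i + 1) →ₗ[R] E i
  inj : ∀ i, Module.Injective R (E i)
  exact : ∀ i : ℤ, LinearMap.range (d (i + 1)) = LinearMap.ker (d i)
  homExact : ∀ (E' : Type u) [AddCommGroup E'] [Module R E'], Module.Injective R E' →
      ∀ (i : ℤ) (g : E' →ₗ[R] E (i + 1)),
        (d i).comp g = 0 ↔ ∃ f : E' →ₗ[R] E (i + 1 + 1), (d (i + 1)).comp f = g
  equiv : G ≃ₗ[R] LinearMap.ker (d (-1))

/-- An `R`-module `G` is Gorenstein injective. -/
def IsGorensteinInjective (R : Type u) [CommRing R] (G : Type u)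
    [AddCommGroup G] [Module R G] : Prop :=
  Nonempty (GorensteinInjData R G)

/-- Data witnessing that `M` is Gorenstein flat. -/
structure GorensteinFlatData (R : Type u) [CommRing R] (M : Type u)
    [AddCommGroup M] [Module R M] where
  F : ℤ → Type u
  [acg : ∀ i, AddCommGroup (F i)]
  [mod : ∀ i, Module R (F i)]
  d : ∀ i : ℤ, F (i + 1) →ₗ[R] F i
  flat : ∀ i, Module.Flat R (F i)
  exact : ∀ i : ℤ, LinearMap.range (d (i + 1)) = LinearMap.ker (d i)
  tensorExact : ∀ (E' : Type u) [AddCommGroup E'] [Module R E'], Module.Injective R E' →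
      ∀ i : ℤ, LinearMap.range (LinearMap.lTensor E' (d (i + 1)))
        = LinearMap.ker (LinearMap.lTensor E' (d i))
  equiv : M ≃ₗ[R] LinearMap.ker (d (-1))

/-- An `R`-module `M` is Gorenstein flat. -/
def IsGorensteinFlat (R : Type u) [CommRing R] (M : Type u)
    [AddCommGroup M] [Module R M] : Prop :=
  Nonempty (GorensteinFlatData R M)

/-- `E` is an injective hull of `M`: `E` is injective and admits an injective
linear map from `M` with essential image. -/
def IsInjectiveHull (R : Type u) [CommRing R] (M : Type u) [AddCommGroup M] [Module R M]
    (E : Type u) [AddCommGroup E] [Module R E] : Prop :=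
  Module.Injective R E ∧ ∃ f : M →ₗ[R] E, Function.Injective f ∧
    ∀ N : Submodule R E, N ≠ ⊥ → N ⊓ LinearMap.range f ≠ ⊥

/-- `D` is a dualizing module for `R`: finitely generated, of finite injective dimension,
the homothety map `R → Hom_R(D,D)` is bijective, and `Ext^i_R(D,D) = 0` for `i ≥ 1`. -/
def IsDualizingModule (R : Type u) [CommRing R] (D : Type u)
    [AddCommGroup D] [Module R D] : Prop :=
  Module.Finite R D ∧
  (∃ n : ℕ, ∀ (M : Type u) (_ : AddCommGroup M) (_ : Module R M), ∀ i : ℕ, n < i →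
      Limits.IsZero (((Ext R (ModuleCat.{u} R) i).obj
        (Opposite.op (ModuleCat.of R M))).obj (ModuleCat.of R D))) ∧
  Function.Bijective (fun r : R => (r • (LinearMap.id : D →ₗ[R] D))) ∧
  (∀ i : ℕ, 0 < i →
    Limits.IsZero (((Ext R (ModuleCat.{u} R) i).obj
      (Opposite.op (ModuleCat.of R D))).obj (ModuleCat.of R D)))

/-- The height of a prime ideal, as the `Order.height` of the corresponding
point of the prime spectrum. -/
noncomputable def idealHeight {R : Type u} [CommRing R] (p : Ideal R) (hp : p.IsPrime) : ℕ∞ :=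
  Order.height (⟨p, hp⟩ : PrimeSpectrum R)

/-!
Over a noetherian ring, an injective module `Q` has two properties: `Γ_b(Q)` is again injective
(Baer's criterion; by Artin–Rees a map from an ideal `J` into `Γ_b(Q)` kills some `b ^ n ⊓ J`),
and `Q` is divisible by `x ^ t` up to a power of `x` (the annihilators of the powers of `x`
stabilise). Divisibility shows that `Γ_(x)` keeps an exact complex of injectives exact. As
`Γ_(I ⊔ J) = Γ_I ∘ Γ_J` and `Γ_J` of such a complex is again one, induction on the generators of
`a` shows that `Γ_a` keeps it exact.

Take the complex `E` witnessing that `N ≅ ker(E₀ → E₋₁)` is Gorenstein injective and extend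
`N → E₀` to `L : M → E₀`. A lift `x ∈ M` of an `a`-torsion class of `M/N` gives an `a`-torsion
boundary `d(L x)`, which is also `d u` for an `a`-torsion `u ∈ E₀`; then `L x - u` comes from
some `y ∈ N`, and `x - y` is an `a`-torsion lift.
-/

open LinearMap (ker range)

section TorsionGamma

variable {R : Type u} [CommRing R] {a b : Ideal R} {M M' : Type u}
  [AddCommGroup M] [Module R M] [AddCommGroup M'] [Module R M']

theorem mem_torsionGamma_iff {v : M} :
    v ∈ torsionGamma a M ↔ ∃ n : ℕ, ∀ r ∈ a ^ n, r • v = 0 := by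
  have hmono : Monotone fun n : ℕ => Submodule.torsionBySet R M ((a ^ n : Ideal R) : Set R) :=
    fun _ _ hnm => Submodule.torsionBySet_le_torsionBySet_of_subset (Ideal.pow_le_pow_right hnm)
  simp only [torsionGamma, Submodule.mem_iSup_of_directed _ hmono.directed_le,
    Submodule.mem_torsionBySet_iff, Subtype.forall, SetLike.mem_coe]

theorem mem_torsionGamma_span_singleton_iff {x : R} {v : M} :
    v ∈ torsionGamma (Ideal.span {x}) M ↔ ∃ n : ℕ, x ^ n • v = 0 := by
  simp only [mem_torsionGamma_iff, Ideal.span_singleton_pow, Ideal.mem_span_singleton]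
  refine exists_congr fun n => ⟨fun h => h _ dvd_rfl, ?_⟩
  rintro h r ⟨c, rfl⟩
  rw [mul_comm, mul_smul, h, smul_zero]

theorem torsionGamma_sup : torsionGamma (a ⊔ b) M = torsionGamma a M ⊓ torsionGamma b M := by
  ext v
  simp only [Submodule.mem_inf, mem_torsionGamma_iff]
  constructor
  · rintro ⟨n, hn⟩
    exact ⟨⟨n, fun r hr => hn r (Ideal.pow_right_mono le_sup_left n hr)⟩,
      ⟨n, fun r hr => hn r (Ideal.pow_right_mono le_sup_right n hr)⟩⟩
  · rintro ⟨⟨n, hn⟩, ⟨m, hm⟩⟩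
    refine ⟨n + m, fun r hr => ?_⟩
    obtain ⟨s, hs, t, ht, rfl⟩ := Submodule.mem_sup.mp (Ideal.sup_pow_add_le_pow_sup_pow hr)
    rw [add_smul, hn s hs, hm t ht, add_zero]

theorem torsionGamma_le_comap (f : M →ₗ[R] M') :
    torsionGamma a M ≤ (torsionGamma a M').comap f := fun v hv => by
  obtain ⟨n, hn⟩ := mem_torsionGamma_iff.mp hv
  exact mem_torsionGamma_iff.mpr ⟨n, fun r hr => by rw [← map_smul, hn r hr, map_zero]⟩

theorem comap_torsionGamma_of_injective {f : M →ₗ[R] M'} (hf : Function.Injective f) :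
    (torsionGamma a M').comap f = torsionGamma a M := by
  refine le_antisymm (fun v hv => ?_) (torsionGamma_le_comap f)
  obtain ⟨n, hn⟩ := mem_torsionGamma_iff.mp hv
  exact mem_torsionGamma_iff.mpr ⟨n, fun r hr => hf (by rw [map_smul, hn r hr, map_zero])⟩

theorem exists_le_torsionBySet_pow_of_fg {S : Submodule R M} (hS : S.FG)
    (h : S ≤ torsionGamma a M) :
    ∃ n : ℕ, S ≤ Submodule.torsionBySet R M ((a ^ n : Ideal R) : Set R) := by
  obtain ⟨s, hs⟩ := CompleteLattice.IsCompactElement.exists_finset_of_le_iSup _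
    ((Submodule.fg_iff_compact S).mp hS) _ h
  refine ⟨s.sup id, hs.trans (iSup₂_le fun n hn => ?_)⟩
  exact Submodule.torsionBySet_le_torsionBySet_of_subset
    (Ideal.pow_le_pow_right (Finset.le_sup (f := id) hn))

end TorsionGamma

section Injective

variable {R : Type u} [Ring R]
  {E : Type u} [AddCommGroup E] [Module R E] [Module.Injective R E]

theorem Module.Injective.exists_comp_eq_of_ker_le {X Y : Type*} [AddCommGroup X] [Module R X]
    [AddCommGroup Y] [Module R Y] (f : X →ₗ[R] Y) (g : X →ₗ[R] E) (h : ker f ≤ ker g) :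
    ∃ e : Y →ₗ[R] E, e ∘ₗ f = g := by
  obtain ⟨e, he⟩ := Module.Injective.extension_property R E _ _ ((ker f).liftQ f le_rfl)
    (LinearMap.ker_eq_bot.mp (Submodule.ker_liftQ_eq_bot _ _ _ le_rfl)) ((ker f).liftQ g h)
  exact ⟨e, LinearMap.ext fun x => by simpa using LinearMap.congr_fun he (Submodule.Quotient.mk x)⟩

theorem Module.Injective.exists_smul_eq {c : R} {y : E} (h : ∀ r : R, r * c = 0 → r • y = 0) :
    ∃ z : E, c • z = y := by
  obtain ⟨e, he⟩ := Module.Injective.exists_comp_eq_of_ker_le (LinearMap.toSpanSingleton R R c)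
    (LinearMap.toSpanSingleton R E y) fun r hr => h r hr
  refine ⟨e 1, ?_⟩
  rw [← map_smul, smul_eq_mul, mul_one]
  simpa using LinearMap.congr_fun he 1

end Injective

section Noetherian

variable {R : Type u} [CommRing R] [IsNoetherianRing R]

theorem Ideal.exists_pow_inf_le_pow_mul (b I : Ideal R) (k : ℕ) :
    ∃ n : ℕ, b ^ n ⊓ I ≤ b ^ k * I := by
  obtain ⟨m, hm⟩ := Ideal.exists_pow_inf_eq_pow_smul b I
  refine ⟨m + k, ?_⟩
  have h := hm (m + k) (Nat.le_add_right m k)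
  rw [smul_eq_mul, Ideal.mul_top, Nat.add_sub_cancel_left] at h
  rw [h]
  exact Ideal.mul_mono_right inf_le_right

variable {M : Type u} [AddCommGroup M] [Module R M]

theorem exists_pow_forall_eq_zero_of_range_le_torsionGamma {b I : Ideal R} (G : I →ₗ[R] M)
    (hG : range G ≤ torsionGamma b M) : ∃ n : ℕ, ∀ y : I, (y : R) ∈ b ^ n → G y = 0 := by
  obtain ⟨k, hk⟩ := exists_le_torsionBySet_pow_of_fg ((IsNoetherian.noetherian ⊤).map G)
    (LinearMap.range_eq_map G ▸ hG)
  have hkG : b ^ k • (⊤ : Submodule R I) ≤ ker G := Submodule.smul_le.mpr fun r hr z _ => by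
    rw [LinearMap.mem_ker, map_smul]
    exact (Submodule.mem_torsionBySet_iff _ _).mp (hk ⟨z, trivial, rfl⟩) ⟨r, hr⟩
  obtain ⟨n, hn⟩ := Ideal.exists_pow_inf_le_pow_mul b I k
  refine ⟨n, fun y hy => ?_⟩
  have hy' : (y : R) ∈ (b ^ k • (⊤ : Submodule R I)).map I.subtype := by
    rw [Submodule.map_smul'', Submodule.map_subtype_top]
    exact hn ⟨hy, y.2⟩
  obtain ⟨y', hy'k, hyy'⟩ := hy'
  rw [← Subtype.ext hyy']
  exact hkG hy'k

variable {E : Type u} [AddCommGroup E] [Module R E] [Module.Injective R E]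

theorem Module.Injective.exists_pow_add_smul_eq (x : R) (t : ℕ) (f : E) :
    ∃ (s : ℕ) (f' : E), x ^ (s + t) • f' = x ^ s • f := by
  obtain ⟨s, hs⟩ :=
    monotone_stabilizes_iff_noetherian.mpr inferInstance (LinearMap.mulLeft R x).iterateKer
  refine ⟨s, Module.Injective.exists_smul_eq fun r hr => ?_⟩
  have hker : ker (LinearMap.mulLeft R x ^ s) = ker (LinearMap.mulLeft R x ^ (s + t)) :=
    hs (s + t) (Nat.le_add_right s t)
  have hr' : r ∈ ker (LinearMap.mulLeft R x ^ (s + t)) := by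
    simpa [LinearMap.pow_mulLeft, mul_comm] using hr
  rw [← hker] at hr'
  replace hr' : x ^ s * r = 0 := by simpa [LinearMap.pow_mulLeft] using hr'
  rw [smul_smul, mul_comm, hr', zero_smul]

instance injective_torsionGamma (b : Ideal R) : Module.Injective R (torsionGamma b E) := by
  refine Module.Baer.injective fun I g => ?_
  obtain ⟨n, hn⟩ := exists_pow_forall_eq_zero_of_range_le_torsionGamma
    ((torsionGamma b E).subtype ∘ₗ g) (by rintro _ ⟨y, rfl⟩; exact (g y).2)
  -- `g` factors through `I ⧸ (b ^ n ⊓ I) ↪ R ⧸ b ^ n`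
  obtain ⟨e, he⟩ := Module.Injective.exists_comp_eq_of_ker_le ((b ^ n).mkQ ∘ₗ I.subtype)
    ((torsionGamma b E).subtype ∘ₗ g) fun y hy => hn y (Ideal.Quotient.eq_zero_iff_mem.mp hy)
  have he_smul : ∀ r : R, e ((b ^ n).mkQ r) = r • e ((b ^ n).mkQ 1) := fun r => by
    rw [← map_smul, ← map_smul, smul_eq_mul, mul_one]
  have he1 : e ((b ^ n).mkQ 1) ∈ torsionGamma b E :=
    mem_torsionGamma_iff.mpr ⟨n, fun r hr => by
      rw [← he_smul, Submodule.mkQ_apply, (Submodule.Quotient.mk_eq_zero _).mpr hr, map_zero]⟩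
  refine ⟨LinearMap.toSpanSingleton R _ ⟨_, he1⟩, fun x hx => Subtype.ext ?_⟩
  rw [LinearMap.toSpanSingleton_apply, Submodule.coe_smul, ← he_smul]
  exact LinearMap.congr_fun he ⟨x, hx⟩

end Noetherian

section Complex

variable {R : Type u} [CommRing R] [IsNoetherianRing R]
  {T : ℤ → Type u} [∀ i, AddCommGroup (T i)] [∀ i, Module R (T i)]
  [∀ i, Module.Injective R (T i)]

theorem exists_torsion_preimage_of_torsion_cycle_span_singleton
    (d : ∀ i : ℤ, T (i + 1) →ₗ[R] T i) (hex : ∀ i, range (d (i + 1)) = ker (d i)) (x : R)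
    {i : ℤ} {v : T (i + 1)} (hv : d i v = 0)
    (hvx : v ∈ torsionGamma (Ideal.span {x}) (T (i + 1))) :
    ∃ u ∈ torsionGamma (Ideal.span {x}) (T (i + 1 + 1)), d (i + 1) u = v := by
  obtain ⟨n, hn⟩ := mem_torsionGamma_span_singleton_iff.mp hvx
  obtain ⟨e, rfl⟩ : v ∈ range (d (i + 1)) := (hex i).ge hv
  obtain ⟨f, hf⟩ : x ^ n • e ∈ range (d (i + 1 + 1)) := by
    rw [hex, LinearMap.mem_ker, map_smul, hn]
  obtain ⟨s, f', hf'⟩ := Module.Injective.exists_pow_add_smul_eq x n f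
  refine ⟨e - d (i + 1 + 1) f', mem_torsionGamma_span_singleton_iff.mpr ⟨s + n, ?_⟩, ?_⟩
  · rw [smul_sub, ← map_smul, hf', map_smul, hf, smul_smul, ← pow_add, sub_self]
  · rw [map_sub, (hex (i + 1)).le ⟨f', rfl⟩, sub_zero]

theorem exists_torsion_preimage_of_torsion_cycle (d : ∀ i : ℤ, T (i + 1) →ₗ[R] T i)
    (hex : ∀ i, range (d (i + 1)) = ker (d i)) (a : Ideal R) {i : ℤ} {v : T (i + 1)}
    (hv : d i v = 0) (hva : v ∈ torsionGamma a (T (i + 1))) :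
    ∃ u ∈ torsionGamma a (T (i + 1 + 1)), d (i + 1) u = v := by
  induction a, IsNoetherian.noetherian a using Submodule.fg_induction generalizing T i with
  | singleton x => exact exists_torsion_preimage_of_torsion_cycle_span_singleton d hex x hv hva
  | sup I J _ _ hI hJ =>
    rw [torsionGamma_sup] at hva
    let d' : ∀ i : ℤ, torsionGamma J (T (i + 1)) →ₗ[R] torsionGamma J (T i) :=
      fun i => (d i).restrict fun _ hw => torsionGamma_le_comap (d i) hw
    have hex' : ∀ i, range (d' (i + 1)) = ker (d' i) := by
      intro i
      ext ⟨w, hw⟩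
      simp only [LinearMap.mem_range, LinearMap.mem_ker, Subtype.ext_iff, d',
        LinearMap.restrict_apply, Subtype.exists, ZeroMemClass.coe_zero]
      constructor
      · rintro ⟨u, -, rfl⟩
        exact (hex i).le ⟨u, rfl⟩
      · intro hdw
        obtain ⟨u, hu, hdu⟩ := hJ d hex hdw hw
        exact ⟨u, hu, hdu⟩
    have hvI : (⟨v, hva.2⟩ : torsionGamma J (T (i + 1))) ∈ torsionGamma I _ :=
      (comap_torsionGamma_of_injective (Submodule.injective_subtype _)).le hva.1
    have hv' : d' i ⟨v, hva.2⟩ = 0 := Subtype.ext hv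
    obtain ⟨u, hu, hdu⟩ := hI (T := fun i => torsionGamma J (T i)) d' hex' hv' hvI
    have hu' : (u : T (i + 1 + 1)) ∈ torsionGamma I _ :=
      (comap_torsionGamma_of_injective (Submodule.injective_subtype _)).ge hu
    exact ⟨u, torsionGamma_sup.ge ⟨hu', u.2⟩, congrArg Subtype.val hdu⟩

end Complex

theorem map_mkQ_torsionGamma_eq_of_exact {R : Type u} [CommRing R] {a : Ideal R}
    {M E F : Type u} [AddCommGroup M] [Module R M] [AddCommGroup E] [Module R E]
    [Module.Injective R E] [AddCommGroup F] [Module R F] {N : Submodule R M}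
    {ℓ : N →ₗ[R] E} (hℓ : Function.Injective ℓ) {g : E →ₗ[R] F} (hℓg : range ℓ = ker g)
    (hg : torsionGamma a F ⊓ range g ≤ (torsionGamma a E).map g) :
    (torsionGamma a M).map N.mkQ = torsionGamma a (M ⧸ N) := by
  refine le_antisymm (Submodule.map_le_iff_le_comap.mpr (torsionGamma_le_comap _))
    fun z hz => ?_
  obtain ⟨x, rfl⟩ := N.mkQ_surjective z
  obtain ⟨n, hn⟩ := mem_torsionGamma_iff.mp hz
  have hxN : ∀ r ∈ a ^ n, r • x ∈ N := fun r hr =>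
    (Submodule.Quotient.mk_eq_zero N).mp (by simpa using hn r hr)
  obtain ⟨L, hL⟩ := Module.Injective.extension_property R E N M N.subtype N.injective_subtype ℓ
  have hLN : ∀ y : N, L y = ℓ y := LinearMap.congr_fun hL
  have hgLx : g (L x) ∈ torsionGamma a F := mem_torsionGamma_iff.mpr ⟨n, fun r hr => by
    rw [← map_smul, ← map_smul, show r • x = ((⟨_, hxN r hr⟩ : N) : M) from rfl, hLN]
    exact hℓg.le ⟨_, rfl⟩⟩
  obtain ⟨u, hu, hgu⟩ := hg ⟨hgLx, L x, rfl⟩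
  obtain ⟨m, hm⟩ := mem_torsionGamma_iff.mp hu
  obtain ⟨y, hy⟩ : L x - u ∈ range ℓ := by
    rw [hℓg, LinearMap.mem_ker, map_sub, hgu, sub_self]
  refine ⟨x - y, mem_torsionGamma_iff.mpr ⟨n + m, fun r hr => ?_⟩, by simp⟩
  have hrN : r • (x - y) ∈ N := smul_sub r x (y : M) ▸
    N.sub_mem (hxN r (Ideal.pow_le_pow_right (Nat.le_add_right n m) hr)) (N.smul_mem r y.2)
  have hℓr : ℓ ⟨_, hrN⟩ = 0 := by
    rw [← hLN, map_smul, map_sub, hLN, hy, sub_sub_cancel,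
      hm r (Ideal.pow_le_pow_right (Nat.le_add_left m n) hr)]
  simpa using hℓ (hℓr.trans ℓ.map_zero.symm)

/-- if `N ⊆ M` is Gorenstein injective, then
`0 → Γ_a(N) → Γ_a(M) → Γ_a(M/N) → 0` is exact: the induced map
`Γ_a(M) → Γ_a(M/N)` is surjective and its kernel is `Γ_a(N)`. -/
theorem torsionGamma_quotient_exact
    {R : Type u} [CommRing R] [IsNoetherianRing R]
    (a : Ideal R) (M : Type u) [AddCommGroup M] [Module R M]
    (N : Submodule R M) (hN : IsGorensteinInjective R N) :
    Submodule.map N.mkQ (torsionGamma a M) = torsionGamma a (M ⧸ N) ∧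
    Submodule.map N.subtype (torsionGamma a N) = torsionGamma a M ⊓ N := by
  obtain ⟨D⟩ := hN
  let := D.acg
  let := D.mod
  have := D.inj
  refine ⟨map_mkQ_torsionGamma_eq_of_exact
    (ℓ := (ker (D.d (-1))).subtype ∘ₗ D.equiv.toLinearMap) (g := D.d (-1)) ?_ ?_ ?_, ?_⟩
  · exact Subtype.val_injective.comp D.equiv.injective
  · rw [LinearMap.range_comp, LinearEquiv.range, Submodule.map_top, Submodule.range_subtype]
  · rintro _ ⟨hv, e, rfl⟩
    exact exists_torsion_preimage_of_torsion_cycle D.d D.exact a (i := -2)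
      ((D.exact (-2)).le ⟨e, rfl⟩) hv
  · rw [← comap_torsionGamma_of_injective N.injective_subtype, Submodule.map_comap_subtype,
      inf_comm]
end

section
/- Let R be a commutative noetherian ring and let p and q be prime ideals of R with q ⊄ p. Then for every R-module X one has E(R/q) ⊗_R Hom_R(E(R/p), X) = 0. -/
open CategoryTheory

universe u

/-!
Pick `r ∈ q \ p`. Since `r ∉ p`, multiplication by `r` is injective on `R/p`, hence on its
essential extension `E(R/p)`, hence bijective there because `E(R/p)` is injective; so it is
surjective on `Hom_R(E(R/p), X)`. Since `r` kills `R/q`, the noetherian hypothesis makes every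
element of the essential extension `E(R/q)` killed by a power of `r`. Thus every pure tensor
`e ⊗ φ = e ⊗ rⁿψ = rⁿe ⊗ ψ` vanishes.
-/

open Submodule TensorProduct

variable {R M E : Type*} [CommRing R] [AddCommGroup M] [Module R M] [AddCommGroup E] [Module R E]

namespace LinearMap

def IsEssential (f : M →ₗ[R] E) : Prop :=
  ∀ N : Submodule R E, N ≠ ⊥ → N ⊓ range f ≠ ⊥

variable {f : M →ₗ[R] E} {r : R}

theorem IsEssential.isSMulRegular (hess : f.IsEssential) (hf : Function.Injective f)
    (hr : IsSMulRegular M r) : IsSMulRegular E r := by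
  rw [isSMulRegular_iff_right_eq_zero_of_smul] at hr
  rw [isSMulRegular_iff_ker_lsmul_eq_bot]
  by_contra hker
  refine hess _ hker (eq_bot_iff.mpr ?_)
  rintro _ ⟨hra, a, rfl⟩
  have hra' : r • a = 0 := hf (by simpa using hra)
  rw [hr a hra', map_zero, mem_bot]

theorem IsEssential.not_isSMulRegular_span_singleton (hess : f.IsEssential)
    (hr : ∀ m : M, r • m = 0) {x : E} (hx : x ≠ 0) : ¬IsSMulRegular (R ∙ x) r := by
  obtain ⟨_, ⟨hy, a, rfl⟩, hy0⟩ :=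
    (Submodule.ne_bot_iff _).mp (hess (R ∙ x) (by rwa [ne_eq, span_singleton_eq_bot]))
  rw [isSMulRegular_submodule_iff_right_eq_zero_of_smul]
  exact fun hreg => hy0 (hreg _ hy (by rw [← map_smul, hr, map_zero]))

end LinearMap

theorem exists_isSMulRegular_span_pow_smul [IsNoetherianRing R] (r : R) (e : E) :
    ∃ n : ℕ, IsSMulRegular (R ∙ r ^ n • e) r := by
  obtain ⟨_, ⟨n, rfl⟩, hmax⟩ := set_has_maximal_iff_noetherian.mpr inferInstance
    (Set.range fun n : ℕ => (R ∙ r ^ n • e).annihilator) (Set.range_nonempty _)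
  have hle : (R ∙ r ^ n • e).annihilator ≤ (R ∙ r ^ (n + 1) • e).annihilator := fun s hs => by
    rw [mem_annihilator_span_singleton] at hs ⊢
    rw [pow_succ', mul_smul, smul_comm, hs, smul_zero]
  have hann := (hle.eq_of_not_lt (hmax _ ⟨n + 1, rfl⟩)).ge
  refine ⟨n, (isSMulRegular_submodule_iff_right_eq_zero_of_smul _ _).mpr fun x hx hrx => ?_⟩
  obtain ⟨s, rfl⟩ := mem_span_singleton.mp hx
  refine (mem_annihilator_span_singleton _ _).mp (hann ?_)
  rwa [mem_annihilator_span_singleton, pow_succ', mul_smul, smul_comm]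

theorem LinearMap.IsEssential.exists_pow_smul_eq_zero [IsNoetherianRing R] {f : M →ₗ[R] E}
    (hess : f.IsEssential) {r : R} (hr : ∀ m : M, r • m = 0) (e : E) : ∃ n : ℕ, r ^ n • e = 0 := by
  obtain ⟨n, hn⟩ := exists_isSMulRegular_span_pow_smul r e
  exact ⟨n, by_contra fun he => hess.not_isSMulRegular_span_singleton hr he hn⟩

theorem Module.Injective.smul_surjective [Module.Injective R E] {r : R} (hr : IsSMulRegular E r) :
    Function.Surjective (r • · : E → E) := fun x => by
  obtain ⟨g, hg⟩ := Module.Injective.out (LinearMap.lsmul R E r) hr LinearMap.id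
  exact ⟨g x, by simpa using hg x⟩

theorem LinearMap.smul_surjective_of_bijective {X : Type*} [AddCommGroup X] [Module R X] {r : R}
    (hr : Function.Bijective (r • · : E → E)) :
    Function.Surjective (r • · : (E →ₗ[R] X) → (E →ₗ[R] X)) := fun g => by
  let μ := LinearEquiv.ofBijective (LinearMap.lsmul R E r) hr
  refine ⟨g ∘ₗ μ.symm.toLinearMap, LinearMap.ext fun x => ?_⟩
  change r • g (μ.symm x) = g x
  rw [← map_smul]
  exact congrArg g (μ.apply_symm_apply x)

theorem TensorProduct.subsingleton_of_smul_surjective {N : Type*} [AddCommGroup N] [Module R N]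
    {r : R} (hM : ∀ m : M, ∃ n : ℕ, r ^ n • m = 0) (hN : Function.Surjective (r • · : N → N)) :
    Subsingleton (M ⊗[R] N) := by
  refine subsingleton_of_forall_eq 0 fun z => ?_
  induction z using TensorProduct.induction_on with
  | zero => rfl
  | add a b ha hb => rw [ha, hb, add_zero]
  | tmul m y =>
    obtain ⟨n, hn⟩ := hM m
    obtain ⟨y, rfl⟩ := (hN.iterate n) y
    rw [smul_iterate_apply, tmul_smul, smul_tmul', hn, zero_tmul]

theorem tensor_injectiveHull_hom_injectiveHull_subsingleton_general
    {R : Type u} [CommRing R] [IsNoetherianRing R]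
    (p q : Ideal R) [p.IsPrime] (hqp : ¬ q ≤ p)
    (Ep : Type u) [AddCommGroup Ep] [Module R Ep]
    (hEp : IsInjectiveHull R (R ⧸ p) Ep)
    (Eq' : Type u) [AddCommGroup Eq'] [Module R Eq']
    (hEq : IsInjectiveHull R (R ⧸ q) Eq')
    (X : Type u) [AddCommGroup X] [Module R X] :
    Subsingleton (TensorProduct R Eq' (Ep →ₗ[R] X)) := by
  obtain ⟨r, hrq, hrp⟩ := SetLike.not_le_iff_exists.mp hqp
  obtain ⟨_, fp, hfp, hfpEss : fp.IsEssential⟩ := hEp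
  obtain ⟨-, fq, -, hfqEss : fq.IsEssential⟩ := hEq
  have hregQuot : IsSMulRegular (R ⧸ p) r := (isSMulRegular_quotient_iff_mem_of_smul_mem p r).mpr
    fun x hx => (Ideal.IsPrime.mem_or_mem ‹_› hx).resolve_left hrp
  have hkillQuot (m : R ⧸ q) : r • m = 0 := by
    rw [Algebra.smul_def, Ideal.Quotient.algebraMap_eq, Ideal.Quotient.eq_zero_iff_mem.mpr hrq,
      zero_mul]
  have hregEp : IsSMulRegular Ep r := hfpEss.isSMulRegular hfp hregQuot
  exact TensorProduct.subsingleton_of_smul_surjective (hfqEss.exists_pow_smul_eq_zero hkillQuot)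
    (LinearMap.smul_surjective_of_bijective ⟨hregEp, Module.Injective.smul_surjective hregEp⟩)

/-- if `q ⊄ p` then `E(R/q) ⊗_R Hom_R(E(R/p), X) = 0`. -/
theorem tensor_injectiveHull_hom_injectiveHull_subsingleton
    {R : Type u} [CommRing R] [IsNoetherianRing R]
    (p q : Ideal R) [p.IsPrime] [q.IsPrime] (hqp : ¬ q ≤ p)
    (Ep : Type u) [AddCommGroup Ep] [Module R Ep]
    (hEp : IsInjectiveHull R (R ⧸ p) Ep)
    (Eq' : Type u) [AddCommGroup Eq'] [Module R Eq']
    (hEq : IsInjectiveHull R (R ⧸ q) Eq')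
    (X : Type u) [AddCommGroup X] [Module R X] :
    Subsingleton (TensorProduct R Eq' (Ep →ₗ[R] X)) :=
  tensor_injectiveHull_hom_injectiveHull_subsingleton_general p q hqp Ep hEp Eq' hEq X
end

section
/- Let R be a commutative noetherian ring and let p and q be prime ideals of R with q ⊄ p. Then the q-torsion submodule of the injective hull E(R/p) vanishes: Γ_q(E(R/p)) = 0. -/
open CategoryTheory

universe u

/-- if `q ⊄ p` then `Γ_q(E(R/p)) = 0`. -/
theorem torsionGamma_injectiveHull_eq_bot
    {R : Type u} [CommRing R] [IsNoetherianRing R]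
    (p q : Ideal R) [p.IsPrime] [q.IsPrime] (hqp : ¬ q ≤ p)
    (Ep : Type u) [AddCommGroup Ep] [Module R Ep]
    (hEp : IsInjectiveHull R (R ⧸ p) Ep) :
    torsionGamma q Ep = ⊥ := by
  obtain ⟨hinj, f, hf, hess⟩ := hEp
  obtain ⟨a, haq, hap⟩ := Set.not_subset.mp hqp
  rw [eq_bot_iff]
  intro x hx
  -- extract n with x ∈ torsionBySet (q^n)
  have hdir : Directed (· ≤ ·) (fun n : ℕ =>
      Submodule.torsionBySet R Ep ((q ^ n : Ideal R) : Set R)) := by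
    intro m n
    refine ⟨max m n, ?_, ?_⟩ <;>
    · apply Submodule.torsionBySet_le_torsionBySet_of_subset
      exact Ideal.pow_le_pow_right (by omega)
  obtain ⟨n, hn⟩ := (Submodule.mem_iSup_of_directed _ hdir).mp hx
  rw [Submodule.mem_torsionBySet_iff] at hn
  by_contra hx0
  have hxne : x ≠ 0 := hx0
  have hN : Submodule.span R {x} ≠ ⊥ := by
    simpa [Submodule.span_singleton_eq_bot] using hxne
  have := hess _ hN
  rw [Submodule.ne_bot_iff] at this
  obtain ⟨y, ⟨hyN, z, hz⟩, hy0⟩ := this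
  obtain ⟨r, hr⟩ := Submodule.mem_span_singleton.mp hyN
  have hz0 : z ≠ 0 := by rintro rfl; simp [map_zero] at hz; exact hy0 hz.symm
  obtain ⟨s, rfl⟩ := Ideal.Quotient.mk_surjective z
  have hs : s ∉ p := by
    intro hs
    exact hz0 ((Ideal.Quotient.eq_zero_iff_mem).mpr hs)
  have han : a ^ n ∈ q ^ n := Ideal.pow_mem_pow haq n
  have hmkeq : (Ideal.Quotient.mk p) (a ^ n * s)
      = (a ^ n : R) • (Ideal.Quotient.mk p) s := rfl
  have hzero : (Ideal.Quotient.mk p) (a ^ n * s) = 0 := by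
    apply hf
    rw [map_zero, hmkeq, map_smul, hz, ← hr, smul_comm]
    have h0 := hn ⟨a ^ n, han⟩
    simp only [smul_eq_mul] at h0 ⊢
    rw [h0, smul_zero]
  have : a ^ n * s ∈ p := Ideal.Quotient.eq_zero_iff_mem.mp hzero
  rcases ‹p.IsPrime›.mem_or_mem this with h | h
  · exact hap (‹p.IsPrime›.mem_of_pow_mem _ h)
  · exact hs h
end
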